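/- arXiv:2407.01429 — 6 statements merged into one kernel-verified Lean document; each statement's English description precedes it below -/
import Mathlib

section
/- Let k ≥ 1 and ℓ ≥ 1, and let n₁, …, n_{ℓ+1} be positive integers with n_a ≥ k for all a. For each a ∈ {1, …, ℓ+1} let γ_a be a k × n_a matrix over 𝔽₂ with full row rank k, and let A be the symmetric matrix over 𝔽₂ indexed by the disjoint union V = V₁ ⊔ ⋯ ⊔ V_{ℓ+1} (with |V_a| = n_a) whose (V_a, V_{a+1}) block equals β_a := γ_aᵀ γ_{a+1} for 1 ≤ a ≤ ℓ, whose (V_{a+1}, V_a) block equals β_aᵀ, and all of whose other blocks (including all diagonal blocks) are zero. Then there exist invertible matrices Q_a ∈ GL(n_a, 𝔽₂) such that, with Q the block-diagonal matrix with diagonal blocks Q₁, …, Q_{ℓ+1}, the congruent matrix Qᵀ A Q is the block-tridiagonal matrix of the same shape whose (V_a, V_{a+1}) block equals β'_a := γ'ᵀ_a γ'_{a+1}, where γ'_a := [I_k | 0] is the k × n_a matrix consisting of the k × k identity followed by zero columns. -/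
open Matrix

/-- The `k × m` matrix `[I_k | 0]` over `𝔽₂`: the `k × k` identity followed by zero columns. -/
def stdGamma (k m : ℕ) : Matrix (Fin k) (Fin m) (ZMod 2) :=
  Matrix.of fun i j => if (i : ℕ) = (j : ℕ) then 1 else 0

/-- The adjacency matrix of the linear trellis graph on vertex sets
`V₀ ⊔ V₁ ⊔ ⋯ ⊔ V_ℓ` (with `|V_a| = n a`), whose `(V_a, V_{a+1})` block is `β a`,
whose `(V_{a+1}, V_a)` block is `(β a)ᵀ`, and all of whose other blocks are zero. -/
def trellis (ℓ : ℕ) (n : ℕ → ℕ)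
    (β : ∀ a : ℕ, Matrix (Fin (n a)) (Fin (n (a + 1))) (ZMod 2)) :
    Matrix ((a : Fin (ℓ + 1)) × Fin (n a)) ((a : Fin (ℓ + 1)) × Fin (n a)) (ZMod 2) :=
  Matrix.of fun x y =>
    if h : (x.1 : ℕ) + 1 = (y.1 : ℕ) then
      β x.1 x.2 (Fin.cast (congrArg n h.symm) y.2)
    else if h' : (y.1 : ℕ) + 1 = (x.1 : ℕ) then
      β y.1 y.2 (Fin.cast (congrArg n h'.symm) x.2)
    else 0

/-- The block-diagonal matrix on `V₀ ⊔ ⋯ ⊔ V_ℓ` with diagonal blocks `Q a`. -/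
def blockDiagMat (ℓ : ℕ) (n : ℕ → ℕ)
    (Q : ∀ a : ℕ, Matrix (Fin (n a)) (Fin (n a)) (ZMod 2)) :
    Matrix ((a : Fin (ℓ + 1)) × Fin (n a)) ((a : Fin (ℓ + 1)) × Fin (n a)) (ZMod 2) :=
  Matrix.of fun x y =>
    if h : (x.1 : ℕ) = (y.1 : ℕ) then
      Q x.1 x.2 (Fin.cast (congrArg n h.symm) y.2)
    else 0

set_option maxHeartbeats 1000000

section Helpers
open Module LinearMap

lemma stdGamma_surj {k m : ℕ} (hkm : k ≤ m) :
    Function.Surjective (stdGamma k m).mulVecLin := by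
  intro c
  refine ⟨fun i => if h : (i : ℕ) < k then c ⟨i, h⟩ else 0, ?_⟩
  funext j
  simp only [Matrix.mulVecLin_apply, Matrix.mulVec, dotProduct, stdGamma, Matrix.of_apply]
  rw [Finset.sum_eq_single (⟨(j : ℕ), lt_of_lt_of_le j.2 hkm⟩ : Fin m)]
  · simp [j.2]
  · intro i _ hi
    have : ¬ ((j : ℕ) = (i : ℕ)) := by
      intro h; exact hi (Fin.ext h.symm)
    simp [this]
  · simp

lemma exists_unit_mul_eq_std {k m : ℕ} (γ : Matrix (Fin k) (Fin m) (ZMod 2))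
    (h : γ.rank = k) :
    ∃ Q : Matrix (Fin m) (Fin m) (ZMod 2), IsUnit Q ∧ γ * Q = stdGamma k m := by
  have hkm : k ≤ m := h ▸ γ.rank_le_width
  set f := γ.mulVecLin with hfdef
  set g := (stdGamma k m).mulVecLin with hgdef
  have hrf : finrank (ZMod 2) (LinearMap.range f) = k := h
  have hf : Function.Surjective f := by
    rw [← LinearMap.range_eq_top]
    apply Submodule.eq_top_of_finrank_eq
    rw [hrf, Module.finrank_fintype_fun_eq_card, Fintype.card_fin]
  have hg : Function.Surjective g := stdGamma_surj hkm
  obtain ⟨sf, hsf⟩ := f.exists_rightInverse_of_surjective (LinearMap.range_eq_top.2 hf)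
  obtain ⟨sg, hsg⟩ := g.exists_rightInverse_of_surjective (LinearMap.range_eq_top.2 hg)
  have hsf' : ∀ c, f (sf c) = c := fun c => congrFun (congrArg DFunLike.coe hsf) c
  have hsg' : ∀ c, g (sg c) = c := fun c => congrFun (congrArg DFunLike.coe hsg) c
  have hkerf : finrank (ZMod 2) (LinearMap.ker f) = m - k := by
    have := f.finrank_range_add_finrank_ker
    rw [Module.finrank_fintype_fun_eq_card, Fintype.card_fin, hrf] at this
    omega
  have hkerg : finrank (ZMod 2) (LinearMap.ker g) = m - k := by
    have := g.finrank_range_add_finrank_ker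
    rw [Module.finrank_fintype_fun_eq_card, Fintype.card_fin] at this
    have hr : finrank (ZMod 2) (LinearMap.range g) = k := by
      rw [LinearMap.range_eq_top.2 hg, finrank_top, Module.finrank_fintype_fun_eq_card,
        Fintype.card_fin]
    omega
  let φ : LinearMap.ker g ≃ₗ[ZMod 2] LinearMap.ker f :=
    LinearEquiv.ofFinrankEq _ _ (by rw [hkerf, hkerg])
  have memg : ∀ x, x - sg (g x) ∈ LinearMap.ker g := fun x => by
    simp [LinearMap.mem_ker, hsg']
  have memf : ∀ x, x - sf (f x) ∈ LinearMap.ker f := fun x => by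
    simp [LinearMap.mem_ker, hsf']
  let pg : (Fin m → ZMod 2) →ₗ[ZMod 2] LinearMap.ker g :=
    (LinearMap.id - sg ∘ₗ g).codRestrict _ memg
  let pf : (Fin m → ZMod 2) →ₗ[ZMod 2] LinearMap.ker f :=
    (LinearMap.id - sf ∘ₗ f).codRestrict _ memf
  have hpg : ∀ x, (pg x : Fin m → ZMod 2) = x - sg (g x) := fun x => rfl
  have hpf : ∀ x, (pf x : Fin m → ZMod 2) = x - sf (f x) := fun x => rfl
  let e : (Fin m → ZMod 2) →ₗ[ZMod 2] (Fin m → ZMod 2) :=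
    (LinearMap.ker f).subtype ∘ₗ φ.toLinearMap ∘ₗ pg + sf ∘ₗ g
  let e' : (Fin m → ZMod 2) →ₗ[ZMod 2] (Fin m → ZMod 2) :=
    (LinearMap.ker g).subtype ∘ₗ φ.symm.toLinearMap ∘ₗ pf + sg ∘ₗ f
  have he : ∀ x, e x = (φ (pg x) : Fin m → ZMod 2) + sf (g x) := fun x => rfl
  have he' : ∀ y, e' y = (φ.symm (pf y) : Fin m → ZMod 2) + sg (f y) := fun y => rfl
  have hfe : ∀ x, f (e x) = g x := by
    intro x
    rw [he, map_add, hsf']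
    have h0 : f ((φ (pg x) : Fin m → ZMod 2)) = 0 := (φ (pg x)).2
    rw [h0, zero_add]
  have hge' : ∀ y, g (e' y) = f y := by
    intro y
    rw [he', map_add, hsg']
    have h0 : g ((φ.symm (pf y) : Fin m → ZMod 2)) = 0 := (φ.symm (pf y)).2
    rw [h0, zero_add]
  have he'e : ∀ x, e' (e x) = x := by
    intro x
    have h1 : pf (e x) = φ (pg x) := by
      apply Subtype.ext
      rw [hpf, hfe, he]
      abel
    rw [he', h1, LinearEquiv.symm_apply_apply, hfe, hpg]
    abel
  have hee' : ∀ y, e (e' y) = y := by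
    intro y
    have h1 : pg (e' y) = φ.symm (pf y) := by
      apply Subtype.ext
      rw [hpg, hge', he']
      abel
    rw [he, h1, LinearEquiv.apply_symm_apply, hge', hpf]
    abel
  let E : (Fin m → ZMod 2) ≃ₗ[ZMod 2] (Fin m → ZMod 2) :=
    LinearEquiv.ofLinear e e' (LinearMap.ext hee') (LinearMap.ext he'e)
  refine ⟨LinearMap.toMatrix' (E : (Fin m → ZMod 2) →ₗ[ZMod 2] (Fin m → ZMod 2)), ?_, ?_⟩
  · refine ⟨⟨_, LinearMap.toMatrix' (E.symm : (Fin m → ZMod 2) →ₗ[ZMod 2] (Fin m → ZMod 2)),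
      ?_, ?_⟩, rfl⟩
    · rw [← LinearMap.toMatrix'_comp]
      have : (E : (Fin m → ZMod 2) →ₗ[ZMod 2] (Fin m → ZMod 2)) ∘ₗ
          (E.symm : (Fin m → ZMod 2) →ₗ[ZMod 2] (Fin m → ZMod 2)) = LinearMap.id := by
        ext v; simp
      rw [this, LinearMap.toMatrix'_id]
    · rw [← LinearMap.toMatrix'_comp]
      have : (E.symm : (Fin m → ZMod 2) →ₗ[ZMod 2] (Fin m → ZMod 2)) ∘ₗ
          (E : (Fin m → ZMod 2) →ₗ[ZMod 2] (Fin m → ZMod 2)) = LinearMap.id := by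
        ext v; simp
      rw [this, LinearMap.toMatrix'_id]
  · apply Matrix.toLin'.injective
    rw [Matrix.toLin'_mul]
    refine LinearMap.ext fun v => ?_
    rw [LinearMap.comp_apply, Matrix.toLin'_toMatrix', Matrix.toLin'_apply', Matrix.toLin'_apply']
    exact hfe v

lemma sum_mul_blockDiag (ℓ : ℕ) (n : ℕ → ℕ)
    (Q : ∀ a : ℕ, Matrix (Fin (n a)) (Fin (n a)) (ZMod 2))
    (y : (c : Fin (ℓ + 1)) × Fin (n c))
    (g : ((c : Fin (ℓ + 1)) × Fin (n c)) → ZMod 2) :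
    ∑ v, g v * blockDiagMat ℓ n Q v y
      = ∑ q : Fin (n y.1), g ⟨y.1, q⟩ * Q y.1 q y.2 := by
  rw [← Finset.univ_sigma_univ, Finset.sum_sigma]
  rw [Finset.sum_eq_single y.1]
  · apply Finset.sum_congr rfl; intro q _
    simp [blockDiagMat]
  · intro c _ hc
    apply Finset.sum_eq_zero; intro q _
    have h : ¬ ((c : ℕ) = ((y.1 : Fin (ℓ+1)) : ℕ)) := fun h => hc (Fin.ext h)
    simp [blockDiagMat, h]
  · simp

lemma blockDiag_mul_sum (ℓ : ℕ) (n : ℕ → ℕ)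
    (Q : ∀ a : ℕ, Matrix (Fin (n a)) (Fin (n a)) (ZMod 2))
    (x : (c : Fin (ℓ + 1)) × Fin (n c))
    (g : ((c : Fin (ℓ + 1)) × Fin (n c)) → ZMod 2) :
    ∑ u, blockDiagMat ℓ n Q u x * g u
      = ∑ p : Fin (n x.1), Q x.1 p x.2 * g ⟨x.1, p⟩ := by
  rw [← Finset.univ_sigma_univ, Finset.sum_sigma]
  rw [Finset.sum_eq_single x.1]
  · apply Finset.sum_congr rfl; intro p _
    simp [blockDiagMat]
  · intro c _ hc
    apply Finset.sum_eq_zero; intro p _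
    have h : ¬ ((c : ℕ) = ((x.1 : Fin (ℓ+1)) : ℕ)) := fun h => hc (Fin.ext h)
    simp [blockDiagMat, h]
  · simp

lemma congr_trellis (ℓ : ℕ) (n : ℕ → ℕ)
    (β β' : ∀ a : ℕ, Matrix (Fin (n a)) (Fin (n (a + 1))) (ZMod 2))
    (Q : ∀ a : ℕ, Matrix (Fin (n a)) (Fin (n a)) (ZMod 2))
    (h : ∀ a : ℕ, a < ℓ → (Q a)ᵀ * β a * Q (a + 1) = β' a) :
    (blockDiagMat ℓ n Q)ᵀ * trellis ℓ n β * blockDiagMat ℓ n Q = trellis ℓ n β' := by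
  ext x y
  obtain ⟨a, i⟩ := x
  obtain ⟨b, j⟩ := y
  rw [Matrix.mul_apply]
  simp only [Matrix.mul_apply, Matrix.transpose_apply]
  rw [sum_mul_blockDiag ℓ n Q ⟨b, j⟩ (fun v => ∑ u, blockDiagMat ℓ n Q u ⟨a, i⟩ * trellis ℓ n β u v)]
  have step : ∀ q : Fin (n b),
      (∑ u, blockDiagMat ℓ n Q u ⟨a, i⟩ * trellis ℓ n β u ⟨b, q⟩)
        = ∑ p : Fin (n a), Q a p i * trellis ℓ n β ⟨a, p⟩ ⟨b, q⟩ :=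
    fun q => blockDiag_mul_sum ℓ n Q ⟨a, i⟩ (fun u => trellis ℓ n β u ⟨b, q⟩)
  simp only [step]
  by_cases h1 : (a : ℕ) + 1 = (b : ℕ)
  · obtain ⟨bv, hbv⟩ := b
    have h1' : (a : ℕ) + 1 = bv := h1
    subst h1'
    have haℓ : (a : ℕ) < ℓ := by omega
    have := congrFun (congrFun (h a haℓ) i) j
    simp only [trellis, Matrix.of_apply, dif_pos h1]
    simp only [dite_true]
    exact this

  · by_cases h2 : (b : ℕ) + 1 = (a : ℕ)
    · obtain ⟨av, hav⟩ := a
      have h2' : (b : ℕ) + 1 = av := h2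
      subst h2'
      have hbℓ : (b : ℕ) < ℓ := by omega
      have := congrFun (congrFun (h b hbℓ) j) i
      simp only [trellis, Matrix.of_apply, dif_neg h1, dif_pos h2]
      simp only [dite_true]
      refine Eq.trans ?_ this
      simp only [Matrix.mul_apply, Matrix.transpose_apply, Finset.sum_mul, Finset.mul_sum]
      rw [Finset.sum_comm]
      exact Finset.sum_congr rfl fun p _ => Finset.sum_congr rfl fun q _ => by
        show Q (↑b + 1) p i * β (↑b) q p * Q (↑b) q j = _
        ring
    · simp [trellis, h1, h2]

end Helpers

/-- **Theorem 1 (sufficiency direction).**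
If every `γ_a ∈ 𝔽₂^{k × n_a}` has full row rank `k` (with `k ≤ n_a`),
then the trellis adjacency matrix with blocks `β_a = γ_aᵀ γ_{a+1}` is congruent, via a
block-diagonal invertible matrix `Q = diag(Q₀, …, Q_ℓ)`, to the trellis adjacency matrix
with blocks `β'_a = γ'_aᵀ γ'_{a+1}` where `γ'_a = [I_k | 0]`. -/

theorem generalized_rgs_local_cnot_sufficiency
    (k ℓ : ℕ) (hk : 1 ≤ k) (hℓ : 1 ≤ ℓ)
    (n : ℕ → ℕ) (hn : ∀ a ≤ ℓ, 0 < n a) (hnk : ∀ a ≤ ℓ, k ≤ n a)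
    (γ : ∀ a : ℕ, Matrix (Fin k) (Fin (n a)) (ZMod 2))
    (hγ : ∀ a ≤ ℓ, (γ a).rank = k) :
    ∃ Q : ∀ a : ℕ, Matrix (Fin (n a)) (Fin (n a)) (ZMod 2),
      (∀ a ≤ ℓ, IsUnit (Q a)) ∧
      (blockDiagMat ℓ n Q)ᵀ * trellis ℓ n (fun a => (γ a)ᵀ * γ (a + 1)) * blockDiagMat ℓ n Q
        = trellis ℓ n (fun a => (stdGamma k (n a))ᵀ * stdGamma k (n (a + 1))) := by
  have H : ∀ a, a ≤ ℓ → ∃ Q : Matrix (Fin (n a)) (Fin (n a)) (ZMod 2),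
      IsUnit Q ∧ γ a * Q = stdGamma k (n a) :=
    fun a ha => exists_unit_mul_eq_std (γ a) (hγ a ha)
  refine ⟨fun a => if h : a ≤ ℓ then (H a h).choose else 1, fun a ha => ?_, ?_⟩
  · simp only [dif_pos ha]
    exact (H a ha).choose_spec.1
  · apply congr_trellis
    intro a ha
    have ha1 : a ≤ ℓ := le_of_lt ha
    have ha2 : a + 1 ≤ ℓ := ha
    simp only [dif_pos ha1, dif_pos ha2]
    set Qa := (H a ha1).choose with hQadef
    set Qb := (H (a + 1) ha2).choose with hQbdef
    have e1 : γ a * Qa = stdGamma k (n a) := (H a ha1).choose_spec.2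
    have e2 : γ (a + 1) * Qb = stdGamma k (n (a + 1)) := (H (a + 1) ha2).choose_spec.2
    rw [← e1, ← e2, Matrix.transpose_mul]
    simp only [Matrix.mul_assoc]
end

section
/- For natural numbers k ≤ ñ, the fraction of k × ñ matrices over 𝔽₂ whose rank is strictly less than k, i.e. the number of such matrices divided by 2^{kñ}, equals ε_d(k, ñ) := 1 − ∏_{i=0}^{k−1} (1 − 2^{i−ñ}) as a real number. Equivalently, a uniformly random k × ñ matrix over 𝔽₂ fails to have full row rank with probability exactly 1 − ∏_{i=0}^{k−1} (1 − 2^{i−ñ}). -/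
/-!
A `k × n` matrix has full row rank exactly when its rows are linearly independent, and over a
field with `q` elements there are `∏_{i<k} (q^n - q^i)` linearly independent `k`-tuples in `K^n`
(the `i`-th vector must avoid the `q^i` elements of the span of the previous ones). The
rank-deficient matrices are the complement, and dividing by `q^(kn) = ∏_{i<k} q^n` gives the
product formula.
-/

open Matrix Finset

namespace Matrix

variable {K m n : Type*} [Field K] [Fintype m] [Fintype n]

theorem rank_eq_card_height_iff_linearIndependent (A : Matrix m n K) :
    A.rank = Fintype.card m ↔ LinearIndependent K A.row := by
  refine ⟨fun hA => ?_, LinearIndependent.rank_matrix⟩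
  rw [linearIndependent_iff_card_eq_finrank_span, Set.finrank, ← rank_eq_finrank_span_row, hA]

variable [Fintype K] {k : ℕ}

local notation "q" => Fintype.card K

theorem card_rank_eq_height (hk : k ≤ Fintype.card n) :
    Nat.card {A : Matrix (Fin k) n K // A.rank = k} =
      ∏ i ∈ range k, (q ^ Fintype.card n - q ^ i) := by
  have e : {A : Matrix (Fin k) n K // A.rank = k} ≃
      {s : Fin k → n → K // LinearIndependent K s} :=
    Equiv.subtypeEquiv Matrix.of.symm fun A => by
      have := A.rank_eq_card_height_iff_linearIndependent; rwa [Fintype.card_fin] at this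
  rw [Nat.card_congr e, card_linearIndependent (by simpa using hk),
    Module.finrank_fintype_fun_eq_card,
    Fin.prod_univ_eq_prod_range (fun i => q ^ Fintype.card n - q ^ i)]

theorem card_rank_lt_height_add_card_rank_eq_height :
    Nat.card {A : Matrix (Fin k) n K // A.rank < k} +
      Nat.card {A : Matrix (Fin k) n K // A.rank = k} = q ^ (k * Fintype.card n) := by
  classical
  have hlt (A : Matrix (Fin k) n K) : A.rank < k ↔ ¬A.rank = k := by
    simpa using (A.rank_le_card_height).lt_iff_ne
  simp only [Nat.card_eq_fintype_card, hlt, Fintype.card_subtype_compl]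
  rw [Nat.sub_add_cancel (Fintype.card_subtype_le _), Fintype.card_congr Matrix.of.symm,
    Fintype.card_fun, Fintype.card_fun, Fintype.card_fin, ← pow_mul, mul_comm]

theorem card_rank_lt_height_div_card_pow (hk : k ≤ Fintype.card n) :
    (Nat.card {A : Matrix (Fin k) n K // A.rank < k} : ℝ) / q ^ (k * Fintype.card n) =
      1 - ∏ i ∈ range k, (1 - (q : ℝ) ^ ((i : ℤ) - Fintype.card n)) := by
  have hq : (q : ℝ) ≠ 0 := by exact_mod_cast Fintype.card_ne_zero
  have hcard := congrArg (Nat.cast (R := ℝ))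
    (card_rank_lt_height_add_card_rank_eq_height (K := K) (n := n) (k := k))
  rw [Nat.cast_add, Nat.cast_pow, ← eq_sub_iff_add_eq] at hcard
  rw [hcard, card_rank_eq_height hk, sub_div, div_self (by positivity), Nat.cast_prod, pow_mul',
    pow_eq_prod_const ((q : ℝ) ^ Fintype.card n) k, ← prod_div_distrib]
  refine congrArg _ (prod_congr rfl fun i hi => ?_)
  have hle : q ^ i ≤ q ^ Fintype.card n :=
    Nat.pow_le_pow_right Fintype.card_pos ((mem_range.mp hi).le.trans hk)
  rw [Nat.cast_sub hle, Nat.cast_pow, Nat.cast_pow, sub_div, div_self (by positivity),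
    zpow_sub₀ hq, zpow_natCast, zpow_natCast]

end Matrix

/-- A uniformly random `k × ñ` matrix over `𝔽₂` (with `k ≤ ñ`) fails to have full row
rank `k` with probability exactly `ε_d(k, ñ) = 1 - ∏_{i=0}^{k-1} (1 - 2^{i-ñ})`:
the number of rank-deficient matrices divided by `2^{kñ}` equals this quantity. -/
theorem rank_deficient_fraction (k ntilde : ℕ) (h : k ≤ ntilde) :
    (Nat.card {G : Matrix (Fin k) (Fin ntilde) (ZMod 2) // G.rank < k} : ℝ) / 2 ^ (k * ntilde)
      = 1 - ∏ i ∈ Finset.range k, (1 - (2 : ℝ) ^ ((i : ℤ) - (ntilde : ℤ))) := by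
  simpa only [ZMod.card, Fintype.card_fin, Nat.cast_ofNat] using
    Matrix.card_rank_lt_height_div_card_pow (K := ZMod 2) (n := Fin ntilde) (by simpa using h)
end

section
/- For natural numbers 1 ≤ k ≤ ñ, the rank-deficiency probability ε_d(k, ñ) := 1 − ∏_{i=0}^{k−1} (1 − 2^{i−ñ}) satisfies the two-sided bound 2^{k−1−ñ} ≤ ε_d(k, ñ) ≤ 2^{k−ñ} (as real numbers). -/
lemma weierstrass_aux (f : ℕ → ℝ) (k : ℕ) (h0 : ∀ i, 0 ≤ f i) (h1 : ∀ i, f i ≤ 1) :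
    1 - ∑ i ∈ Finset.range k, f i ≤ ∏ i ∈ Finset.range k, (1 - f i) := by
  induction k with
  | zero => simp
  | succ n ih =>
    rw [Finset.sum_range_succ, Finset.prod_range_succ]
    have hple : ∏ i ∈ Finset.range n, (1 - f i) ≤ 1 :=
      Finset.prod_le_one (fun i _ => by linarith [h1 i]) (fun i _ => by linarith [h0 i])
    nlinarith [h0 n, h1 n]

/-- Two-sided bound on the rank-deficiency probability
`ε_d(k, ñ) = 1 - ∏_{i=0}^{k-1} (1 - 2^{i-ñ})` for `1 ≤ k ≤ ñ`:
`2^{k-1-ñ} ≤ ε_d(k, ñ) ≤ 2^{k-ñ}`. -/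
theorem rank_deficiency_probability_bounds (k ntilde : ℕ) (hk : 1 ≤ k) (h : k ≤ ntilde) :
    (2 : ℝ) ^ ((k : ℤ) - 1 - (ntilde : ℤ))
        ≤ 1 - ∏ i ∈ Finset.range k, (1 - (2 : ℝ) ^ ((i : ℤ) - (ntilde : ℤ))) ∧
    1 - ∏ i ∈ Finset.range k, (1 - (2 : ℝ) ^ ((i : ℤ) - (ntilde : ℤ)))
        ≤ (2 : ℝ) ^ ((k : ℤ) - (ntilde : ℤ)) := by
  set f : ℕ → ℝ := fun i => (2 : ℝ) ^ ((i : ℤ) - (ntilde : ℤ)) with hf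
  have h0 : ∀ i, 0 ≤ f i := fun i => le_of_lt (zpow_pos (by norm_num) _)
  have h1 : ∀ i, i < k → f i ≤ 1 := by
    intro i hi
    have : (i : ℤ) - (ntilde : ℤ) ≤ 0 := by
      have : (i : ℤ) < ntilde := by exact_mod_cast lt_of_lt_of_le hi h
      omega
    calc f i ≤ (2 : ℝ) ^ (0 : ℤ) := zpow_le_zpow_right₀ (by norm_num) this
    _ = 1 := by norm_num
  constructor
  · -- lower bound: 1 - ∏ ≥ f (k-1)
    obtain ⟨m, rfl⟩ : ∃ m, k = m + 1 := ⟨k - 1, by omega⟩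
    rw [Finset.prod_range_succ]
    have hple : ∏ i ∈ Finset.range m, (1 - f i) ≤ 1 :=
      Finset.prod_le_one (fun i hi => by
        have := h1 i (by simpa using (Finset.mem_range.mp hi).trans (Nat.lt_succ_self m)); linarith)
        (fun i _ => by linarith [h0 i])
    have hpnn : 0 ≤ ∏ i ∈ Finset.range m, (1 - f i) :=
      Finset.prod_nonneg (fun i hi => by
        have := h1 i (by simpa using (Finset.mem_range.mp hi).trans (Nat.lt_succ_self m)); linarith)
    have hfm1 : f m ≤ 1 := h1 m (Nat.lt_succ_self m)
    have key : (∏ i ∈ Finset.range m, (1 - f i)) * (1 - f m) ≤ 1 - f m := by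
      nlinarith [h0 m]
    have : (2 : ℝ) ^ ((m : ℤ) + 1 - 1 - (ntilde : ℤ)) = f m := by
      simp [hf]
    push_cast
    nlinarith [h0 m]
  · -- upper bound via Weierstrass and geometric sum
    have hw := weierstrass_aux (fun i => min (f i) 1) k (fun i => le_min (h0 i) zero_le_one)
      (fun i => min_le_right _ _)
    have hmin : ∀ i ∈ Finset.range k, min (f i) 1 = f i := fun i hi =>
      min_eq_left (h1 i (Finset.mem_range.mp hi))
    rw [Finset.sum_congr rfl hmin,
        Finset.prod_congr rfl (fun i hi => by rw [hmin i hi])] at hw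
    have hsum : ∑ i ∈ Finset.range k, f i ≤ (2 : ℝ) ^ ((k : ℤ) - (ntilde : ℤ)) := by
      have : ∑ i ∈ Finset.range k, f i
          = (2 : ℝ) ^ (-(ntilde : ℤ)) * ∑ i ∈ Finset.range k, (2 : ℝ) ^ i := by
        rw [Finset.mul_sum]
        refine Finset.sum_congr rfl fun i _ => ?_
        show (2:ℝ) ^ ((i:ℤ) - (ntilde:ℤ)) = _
        rw [show (i : ℤ) - (ntilde : ℤ) = -(ntilde : ℤ) + i by ring, zpow_add₀ (by norm_num)]
        norm_num
      rw [this, geom_sum_eq (by norm_num)]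
      have h2 : (2 : ℝ) ^ ((k : ℤ) - (ntilde : ℤ))
          = (2 : ℝ) ^ (-(ntilde : ℤ)) * (2 : ℝ) ^ k := by
        rw [show (k : ℤ) - (ntilde : ℤ) = -(ntilde : ℤ) + k by ring, zpow_add₀ (by norm_num)]
        norm_num
      rw [h2]
      have : (0:ℝ) < (2 : ℝ) ^ (-(ntilde : ℤ)) := zpow_pos (by norm_num) _
      have hg : ((2:ℝ) ^ k - 1) / (2 - 1) ≤ (2:ℝ) ^ k := by
        norm_num
      nlinarith
    linarith
end

section
/- Let n and k be natural numbers with k ≤ n and let q ∈ [0, 1] be a real number. Then the following identity holds: (1/2^{kn}) · Σ_{G} Σ_{S ⊆ {1,…,n}} q^{|S|} (1 − q)^{n−|S|} · 𝟙[rank(G|_S) < k] = Σ_{ñ=0}^{n} ε_d(k, ñ) · C(n, ñ) · q^ñ (1 − q)^{n−ñ}, where the outer sum on the left runs over all k × n matrices G over 𝔽₂, G|_S denotes the k × |S| submatrix of G formed by the columns indexed by S, 𝟙[·] is the indicator function, and C(n, ñ) is the binomial coefficient. -/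
open Matrix

/-- The rank-deficiency probability `ε_d(k, ñ) = 1 - ∏_{i=0}^{k-1} (1 - 2^{i-ñ})` of a
uniformly random `k × ñ` matrix over `𝔽₂`. -/
noncomputable def epsDef (k ntilde : ℕ) : ℝ :=
  1 - ∏ i ∈ Finset.range k, (1 - (2 : ℝ) ^ ((i : ℤ) - (ntilde : ℤ)))

/-!
For a fixed set `S` of retained columns, `G ↦ G|_S` maps the uniform distribution on `k × n`
matrices to the uniform one on `k × |S|` matrices, and a `k × ñ` matrix over `𝔽₂` has rank `k`
exactly when its rows are linearly independent, which happens for `∏_{i<k} (2^ñ - 2^i)` of the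
`2^{kñ}` matrices. So the fraction of the `G` that are deficient on `S` is `ε_d(k, |S|)`, and
grouping the erasure patterns `S` by size produces the binomial weights.
-/

open Finset Fintype

namespace Matrix

theorem card_eq_pow (m n α : Type*) [Fintype m] [DecidableEq m] [Fintype n] [DecidableEq n]
    [Fintype α] : card (Matrix m n α) = card α ^ (card m * card n) := by
  rw [← Nat.card_eq_fintype_card]
  simp [Matrix, ← pow_mul, mul_comm]

theorem rank_lt_card_height_iff_not_linearIndependent {m n K : Type*} [Fintype m] [Fintype n]
    [Field K] (A : Matrix m n K) : A.rank < card m ↔ ¬LinearIndependent K A.row := by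
  rw [A.rank_le_card_height.lt_iff_ne, ne_eq, not_iff_not,
    linearIndependent_iff_card_eq_finrank_span, A.rank_eq_finrank_span_row, Set.finrank, eq_comm]

/-- For `k > card ι` both sides vanish: the factor `i = card ι` of the product is zero. -/
theorem card_linearIndependent_rows {K ι R : Type*} [Field K] [Fintype K] [Fintype ι]
    [DecidableEq ι] [CommRing R] (k : ℕ)
    [DecidablePred fun A : Matrix (Fin k) ι K => LinearIndependent K A.row] :
    (#{A : Matrix (Fin k) ι K | LinearIndependent K A.row} : R) =
      ∏ i ∈ range k, ((card K : R) ^ card ι - (card K : R) ^ i) := by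
  have hfinrank : Module.finrank K (ι → K) = card ι := Module.finrank_fintype_fun_eq_card K
  rcases le_or_gt k (card ι) with hk | hk
  · have hcount : #{A : Matrix (Fin k) ι K | LinearIndependent K A.row} =
        ∏ i : Fin k, (card K ^ card ι - card K ^ (i : ℕ)) := by
      rw [← Fintype.card_subtype, ← Nat.card_eq_fintype_card, ← hfinrank]
      exact card_linearIndependent (hfinrank ▸ hk)
    rw [hcount, Nat.cast_prod,
      Fin.prod_univ_eq_prod_range fun i => ((card K ^ card ι - card K ^ i : ℕ) : R)]
    refine prod_congr rfl fun i hi => ?_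
    rw [Nat.cast_sub (Nat.pow_le_pow_right card_pos ((mem_range.1 hi).le.trans hk))]
    push_cast
    rfl
  · have hempty : ({A : Matrix (Fin k) ι K | LinearIndependent K A.row} : Finset _) = ∅ := by
      refine filter_false_of_mem fun A _ hA => ?_
      have hle := hA.fintype_card_le_finrank
      rw [Fintype.card_fin, hfinrank] at hle
      omega
    rw [hempty, Finset.card_empty, Nat.cast_zero, prod_eq_zero (mem_range.2 hk) (sub_self _)]

theorem sum_submatrix_finset {m ι α β : Type*} [Fintype m] [DecidableEq m] [Fintype ι]
    [DecidableEq ι] [Fintype α] [AddCommMonoid β] (S : Finset ι) (f : Matrix m S α → β) :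
    ∑ G : Matrix m ι α, f (G.submatrix id Subtype.val) =
      card (Matrix m {j // j ∉ S} α) • ∑ A : Matrix m S α, f A := by
  let e : Matrix m ι α ≃ Matrix m S α × Matrix m {j // j ∉ S} α :=
    (Equiv.piCongrRight fun _ => Equiv.piEquivPiSubtypeProd (· ∈ S) fun _ => α).trans
      (Equiv.arrowProdEquivProdArrow _ _ _)
  have he : ∀ G, (e G).1 = G.submatrix id Subtype.val := fun _ => rfl
  simp_rw [← he]
  rw [e.sum_comp (fun x => f x.1), Fintype.sum_prod_type_right' (fun A _ => f A), sum_const,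
    card_univ]

end Matrix

theorem two_pow_mul_epsDef (k m : ℕ) :
    (2 : ℝ) ^ (k * m) * epsDef k m = 2 ^ (k * m) - ∏ i ∈ range k, ((2 : ℝ) ^ m - 2 ^ i) := by
  have hpow : (2 : ℝ) ^ (k * m) = ∏ _i ∈ range k, (2 : ℝ) ^ m := by
    rw [prod_const, card_range, ← pow_mul, mul_comm]
  rw [epsDef, mul_sub, mul_one, hpow, ← prod_mul_distrib]
  congr 1
  refine prod_congr rfl fun i _ => ?_
  rw [mul_sub, mul_one, ← zpow_natCast, ← zpow_natCast, ← zpow_add₀ two_ne_zero, add_sub_cancel]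

theorem card_rank_lt_eq_two_pow_mul_epsDef (k : ℕ) (ι : Type*) [Fintype ι] [DecidableEq ι] :
    (#{A : Matrix (Fin k) ι (ZMod 2) | A.rank < k} : ℝ) =
      2 ^ (k * card ι) * epsDef k (card ι) := by
  classical
  have hsplit := card_filter_add_card_filter_not (s := (univ : Finset (Matrix (Fin k) ι (ZMod 2))))
    fun A => LinearIndependent (ZMod 2) A.row
  have hdeficient : univ.filter (fun A : Matrix (Fin k) ι (ZMod 2) => A.rank < k) =
      univ.filter fun A => ¬LinearIndependent (ZMod 2) A.row := by
    refine filter_congr fun A _ => ?_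
    simpa using A.rank_lt_card_height_iff_not_linearIndependent
  have hindep := card_linearIndependent_rows (K := ZMod 2) (ι := ι) (R := ℝ) k
  rw [ZMod.card, Nat.cast_ofNat] at hindep
  rw [hdeficient, two_pow_mul_epsDef, ← hindep, eq_sub_iff_add_eq', ← Nat.cast_add, hsplit,
    card_univ, card_eq_pow, ZMod.card, Fintype.card_fin]
  push_cast
  rfl

theorem card_rank_submatrix_lt_eq_two_pow_mul_epsDef (k : ℕ) {ι : Type*} [Fintype ι]
    [DecidableEq ι] (S : Finset ι) :
    (#{G : Matrix (Fin k) ι (ZMod 2) | (G.submatrix id fun j : S => (j : ι)).rank < k} : ℝ) =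
      2 ^ (k * card ι) * epsDef k #S := by
  rw [card_filter, Nat.cast_sum,
    sum_submatrix_finset S fun A => ((if A.rank < k then 1 else 0 : ℕ) : ℝ), ← Nat.cast_sum,
    ← card_filter, card_rank_lt_eq_two_pow_mul_epsDef, card_eq_pow, Fintype.card_subtype_compl,
    Fintype.card_coe, ZMod.card, Fintype.card_fin, nsmul_eq_mul, ← mul_assoc, Nat.cast_pow,
    Nat.cast_ofNat, ← pow_add, ← mul_add, Nat.sub_add_cancel S.card_le_univ]

theorem average_rank_deficiency_binomial_general (k n : ℕ)
    (q : ℝ) :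
    (1 / 2 ^ (k * n)) *
        ∑ G : Matrix (Fin k) (Fin n) (ZMod 2), ∑ S : Finset (Fin n),
          q ^ S.card * (1 - q) ^ (n - S.card) *
            (if (G.submatrix id (fun j : {x // x ∈ S} => (j : Fin n))).rank < k
              then (1 : ℝ) else 0)
      = ∑ ntilde ∈ Finset.range (n + 1),
          epsDef k ntilde * (n.choose ntilde : ℝ) * q ^ ntilde * (1 - q) ^ (n - ntilde) := by
  have hweight : ∀ S : Finset (Fin n),
      ∑ G : Matrix (Fin k) (Fin n) (ZMod 2), q ^ #S * (1 - q) ^ (n - #S) *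
          (if (G.submatrix id fun j : S => (j : Fin n)).rank < k then (1 : ℝ) else 0) =
        2 ^ (k * n) * (epsDef k #S * q ^ #S * (1 - q) ^ (n - #S)) := fun S => by
    rw [← mul_sum, sum_boole, card_rank_submatrix_lt_eq_two_pow_mul_epsDef, Fintype.card_fin]
    ring
  rw [sum_comm, sum_congr rfl fun S _ => hweight S, ← mul_sum, one_div,
    inv_mul_cancel_left₀ (by positivity), ← powerset_univ,
    sum_powerset_apply_card fun m => epsDef k m * q ^ m * (1 - q) ^ (n - m), card_univ,
    Fintype.card_fin]
  refine sum_congr rfl fun m _ => ?_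
  rw [nsmul_eq_mul]
  ring

/-- Law of total probability for the average rank-deficiency probability: for a uniformly
random `k × n` generator matrix `G` over `𝔽₂` whose columns are independently retained
with probability `q`, the probability that the retained submatrix has rank `< k` equals
`Σ_{ñ=0}^{n} ε_d(k, ñ) · C(n, ñ) · q^ñ (1-q)^{n-ñ}`. -/
theorem average_rank_deficiency_binomial (k n : ℕ) (hkn : k ≤ n)
    (q : ℝ) (hq0 : 0 ≤ q) (hq1 : q ≤ 1) :
    (1 / 2 ^ (k * n)) *
        ∑ G : Matrix (Fin k) (Fin n) (ZMod 2), ∑ S : Finset (Fin n),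
          q ^ S.card * (1 - q) ^ (n - S.card) *
            (if (G.submatrix id (fun j : {x // x ∈ S} => (j : Fin n))).rank < k
              then (1 : ℝ) else 0)
      = ∑ ntilde ∈ Finset.range (n + 1),
          epsDef k ntilde * (n.choose ntilde : ℝ) * q ^ ntilde * (1 - q) ^ (n - ntilde) :=
  average_rank_deficiency_binomial_general k n q
end

section
/- Let p ∈ (0, 1) and R ∈ (0, 1 − p) be real numbers, and for each n set k_n := ⌊R n⌋. Then there exist constants C > 0 and c > 0 such that for all n ≥ 1, Σ_{ñ=0}^{n} ε_d(k_n, ñ) · C(n, ñ) · (1 − p)^ñ p^{n−ñ} ≤ C · e^{−c n}. In other words, below the erasure-channel capacity 1 − p, the average rank-deficiency probability ⟨ε_d⟩ of a random code of rate R decays exponentially in n. -/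
lemma factor_nonneg {i n : ℕ} (h : i ≤ n) :
    0 ≤ 1 - (2 : ℝ) ^ ((i : ℤ) - (n : ℤ)) := by
  have h1 : (2 : ℝ) ^ ((i : ℤ) - (n : ℤ)) ≤ 1 :=
    zpow_le_one_of_nonpos₀ (by norm_num) (by omega)
  linarith

lemma epsDef_le_one (k n : ℕ) : epsDef k n ≤ 1 := by
  unfold epsDef
  rcases le_or_gt k n with h | h
  · have : 0 ≤ ∏ i ∈ Finset.range k, (1 - (2 : ℝ) ^ ((i : ℤ) - (n : ℤ))) :=
      Finset.prod_nonneg fun i hi =>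
        factor_nonneg (le_trans (Nat.le_of_lt_succ (Nat.lt_succ_of_lt (Finset.mem_range.1 hi))) h)
    linarith
  · rw [Finset.prod_eq_zero (Finset.mem_range.2 h) (by simp)]
    norm_num

lemma sum_zpow_le (k n : ℕ) :
    ∑ i ∈ Finset.range k, (2 : ℝ) ^ ((i : ℤ) - (n : ℤ)) ≤ (2 : ℝ) ^ ((k : ℤ) - (n : ℤ)) := by
  induction k with
  | zero => simpa using le_of_lt (zpow_pos (by norm_num : (0:ℝ) < 2) _)
  | succ k ih =>
      rw [Finset.sum_range_succ]
      have he : ((k + 1 : ℕ) : ℤ) - (n : ℤ) = ((k : ℤ) - (n : ℤ)) + 1 := by push_cast; ring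
      rw [he, zpow_add_one₀ (by norm_num : (2:ℝ) ≠ 0)]
      linarith

lemma one_sub_prod_le_sum (k n : ℕ) (h : k ≤ n) :
    1 - ∏ i ∈ Finset.range k, (1 - (2 : ℝ) ^ ((i : ℤ) - (n : ℤ)))
      ≤ ∑ i ∈ Finset.range k, (2 : ℝ) ^ ((i : ℤ) - (n : ℤ)) := by
  induction k with
  | zero => simp
  | succ k ih =>
      have hk : k ≤ n := Nat.le_of_succ_le h
      have ih' := ih hk
      rw [Finset.prod_range_succ, Finset.sum_range_succ]
      set P := ∏ i ∈ Finset.range k, (1 - (2 : ℝ) ^ ((i : ℤ) - (n : ℤ))) with hP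
      set x := (2 : ℝ) ^ ((k : ℤ) - (n : ℤ)) with hx
      have hx0 : 0 ≤ x := le_of_lt (zpow_pos (by norm_num : (0:ℝ) < 2) _)
      have hP1 : P ≤ 1 := Finset.prod_le_one
        (fun i hi => factor_nonneg (le_trans (le_of_lt (Finset.mem_range.1 hi)) hk))
        (fun i hi => by
          have : 0 < (2 : ℝ) ^ ((i : ℤ) - (n : ℤ)) := zpow_pos (by norm_num) _
          linarith)
      have hmul : P * x ≤ x := mul_le_of_le_one_left hx0 hP1
      have hring : P * (1 - x) = P - P * x := by ring
      linarith

lemma epsDef_le_zpow {k n : ℕ} (h : k ≤ n) :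
    epsDef k n ≤ (2 : ℝ) ^ ((k : ℤ) - (n : ℤ)) :=
  le_trans (one_sub_prod_le_sum k n h) (sum_zpow_le k n)

set_option maxHeartbeats 1000000 in
/-- Below the erasure-channel capacity `1 - p`, the average rank-deficiency probability
`⟨ε_d⟩ = Σ_{ñ=0}^{n} ε_d(⌊Rn⌋, ñ) C(n, ñ) (1-p)^ñ p^{n-ñ}` of a random code of rate `R`
decays exponentially in `n`. -/
theorem average_rank_deficiency_below_capacity
    (p R : ℝ) (hp0 : 0 < p) (hp1 : p < 1) (hR0 : 0 < R) (hRcap : R < 1 - p) :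
    ∃ C > (0 : ℝ), ∃ c > (0 : ℝ), ∀ n : ℕ, 1 ≤ n →
      ∑ ntilde ∈ Finset.range (n + 1),
          epsDef ⌊R * (n : ℝ)⌋₊ ntilde * (n.choose ntilde : ℝ) *
            (1 - p) ^ ntilde * p ^ (n - ntilde)
        ≤ C * Real.exp (-c * (n : ℝ)) := by
  set q : ℝ := 1 - p with hq
  have hq0 : 0 < q := by linarith
  have hq1 : q < 1 := by linarith
  set γ : ℝ := (R + q) / 2 with hγ
  have hγR : R < γ := by rw [hγ]; linarith
  have hγq : γ < q := by rw [hγ]; linarith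
  have hγ0 : 0 < γ := by rw [hγ]; linarith
  set ε : ℝ := (q - γ) / (2 * q) with hε
  have hε0 : 0 < ε := by
    apply div_pos (by linarith) (by linarith)
  have hε1 : ε < 1 := by
    rw [hε, div_lt_one (by linarith)]
    linarith
  set t : ℝ := 1 - ε with ht
  have ht0 : 0 < t := by rw [ht]; linarith
  have ht1 : t < 1 := by rw [ht]; linarith
  -- the key inequality `p + q*t < t^γ`
  have hkey : p + q * t < t ^ γ := by
    have h1 : p + q * t = 1 - q * ε := by rw [ht, hq]; ring
    have h2 : γ * ε / t < q * ε := by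
      rw [div_lt_iff₀ ht0]
      have : γ < q * t := by
        rw [ht, hε]
        have : q * (1 - (q - γ) / (2 * q)) = (q + γ) / 2 := by
          field_simp; ring
        rw [this]; linarith
      nlinarith
    have h3 : 1 - γ * ε / t ≤ Real.exp (-(γ * ε / t)) := by
      have := Real.add_one_le_exp (-(γ * ε / t)); linarith
    have h4 : Real.exp (-(γ * ε / t)) ≤ t ^ γ := by
      rw [Real.rpow_def_of_pos ht0, Real.exp_le_exp]
      have hlog : -(ε / t) ≤ Real.log t := by
        have h5 : 1 + ε / t ≤ Real.exp (ε / t) := by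
          have := Real.add_one_le_exp (ε / t); linarith
        have h6 : 1 / t ≤ Real.exp (ε / t) := by
          have he : 1 / t = 1 + ε / t := by
            rw [eq_comm, add_div' _ _ _ (ne_of_gt ht0), div_eq_div_iff (ne_of_gt ht0) (ne_of_gt ht0)]
            rw [ht]; ring
          rw [he]; exact h5
        have h7 : Real.exp (-(ε / t)) ≤ t := by
          rw [Real.exp_neg]
          rw [inv_le_comm₀ (Real.exp_pos _) ht0, ← one_div]
          exact h6
        calc -(ε / t) = Real.log (Real.exp (-(ε / t))) := (Real.log_exp _).symm
          _ ≤ Real.log t := Real.log_le_log (Real.exp_pos _) h7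
      calc Real.log t * γ = γ * Real.log t := mul_comm _ _
        _ ≥ γ * (-(ε / t)) := by
            apply mul_le_mul_of_nonneg_left hlog (le_of_lt hγ0)
        _ = -(γ * ε / t) := by ring
    calc p + q * t = 1 - q * ε := h1
      _ < 1 - γ * ε / t := by linarith
      _ ≤ Real.exp (-(γ * ε / t)) := h3
      _ ≤ t ^ γ := h4
  have htγ0 : 0 < t ^ γ := Real.rpow_pos_of_pos ht0 γ
  set f : ℝ := (p + q * t) / t ^ γ with hf
  have hf0 : 0 < f := div_pos (by nlinarith) htγ0
  have hf1 : f < 1 := (div_lt_one htγ0).2 hkey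
  set c₁ : ℝ := -Real.log f with hc₁
  have hc₁0 : 0 < c₁ := by
    rw [hc₁, neg_pos]
    exact Real.log_neg hf0 hf1
  set c₂ : ℝ := (γ - R) * Real.log 2 with hc₂
  have hc₂0 : 0 < c₂ :=
    mul_pos (by linarith) (Real.log_pos (by norm_num))
  refine ⟨2, by norm_num, min c₁ c₂, lt_min hc₁0 hc₂0, fun n hn => ?_⟩
  set k := ⌊R * (n : ℝ)⌋₊ with hk
  have hn0 : (0:ℝ) < (n:ℝ) := by exact_mod_cast hn
  have hkRn : (k : ℝ) ≤ R * n := Nat.floor_le (by positivity)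
  -- weights
  set w : ℕ → ℝ := fun m => (n.choose m : ℝ) * q ^ m * p ^ (n - m) with hw
  have hw0 : ∀ m, 0 ≤ w m := fun m => by
    apply mul_nonneg (mul_nonneg (by positivity) (by positivity)) (by positivity)
  have hwsum : ∑ m ∈ Finset.range (n + 1), w m = 1 := by
    have := add_pow q p n
    simp only [hw]
    rw [show ∑ m ∈ Finset.range (n+1), (n.choose m : ℝ) * q ^ m * p ^ (n - m)
        = ∑ m ∈ Finset.range (n+1), q ^ m * p ^ (n - m) * (n.choose m : ℝ) from
      Finset.sum_congr rfl fun m _ => by ring, ← this]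
    rw [show q + p = 1 by rw [hq]; ring, one_pow]
  -- split the sum
  rw [show ∑ ntilde ∈ Finset.range (n + 1),
        epsDef k ntilde * (n.choose ntilde : ℝ) * q ^ ntilde * p ^ (n - ntilde)
      = ∑ ntilde ∈ Finset.range (n + 1), epsDef k ntilde * w ntilde from
    Finset.sum_congr rfl fun m _ => by rw [hw]; ring]
  rw [← Finset.sum_filter_add_sum_filter_not (Finset.range (n+1))
    (fun m : ℕ => (m : ℝ) ≤ γ * n)]
  -- bound the low part
  have hlow : ∑ m ∈ (Finset.range (n+1)).filter (fun m : ℕ => (m : ℝ) ≤ γ * n),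
      epsDef k m * w m ≤ Real.exp (-c₁ * n) := by
    have step1 : ∑ m ∈ (Finset.range (n+1)).filter (fun m : ℕ => (m : ℝ) ≤ γ * n),
        epsDef k m * w m
        ≤ ∑ m ∈ (Finset.range (n+1)).filter (fun m : ℕ => (m : ℝ) ≤ γ * n),
          (t ^ γ) ^ (-(n:ℝ) : ℝ) * (t ^ m * w m) := by
      apply Finset.sum_le_sum
      intro m hm
      rw [Finset.mem_filter] at hm
      have hmγ : (m : ℝ) ≤ γ * n := hm.2
      have hge1 : 1 ≤ (t ^ γ) ^ (-(n:ℝ) : ℝ) * t ^ m := by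
        have e1 : (t ^ γ) ^ (-(n:ℝ) : ℝ) = t ^ (-(γ * n)) := by
          rw [← Real.rpow_mul (le_of_lt ht0)]
          congr 1
          ring
        have e2 : (t : ℝ) ^ m = t ^ ((m : ℝ)) := (Real.rpow_natCast t m).symm
        rw [e1, e2, ← Real.rpow_add ht0]
        have : -(γ * n) + (m : ℝ) ≤ 0 := by linarith
        calc (1:ℝ) = t ^ (0:ℝ) := (Real.rpow_zero t).symm
          _ ≤ t ^ (-(γ * n) + (m:ℝ)) := by
              exact Real.rpow_le_rpow_of_exponent_ge ht0 (le_of_lt ht1) this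
      calc epsDef k m * w m ≤ 1 * w m := by
            apply mul_le_mul_of_nonneg_right (epsDef_le_one k m) (hw0 m)
        _ = w m := one_mul _
        _ ≤ ((t ^ γ) ^ (-(n:ℝ) : ℝ) * t ^ m) * w m := le_mul_of_one_le_left (hw0 m) hge1
        _ = (t ^ γ) ^ (-(n:ℝ) : ℝ) * (t ^ m * w m) := by ring
    have step2 : ∑ m ∈ (Finset.range (n+1)).filter (fun m : ℕ => (m : ℝ) ≤ γ * n),
        (t ^ γ) ^ (-(n:ℝ) : ℝ) * (t ^ m * w m)
        ≤ ∑ m ∈ Finset.range (n+1), (t ^ γ) ^ (-(n:ℝ) : ℝ) * (t ^ m * w m) := by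
      apply Finset.sum_le_sum_of_subset_of_nonneg (Finset.filter_subset _ _)
      intro m _ _
      have := hw0 m
      positivity
    have step3 : ∑ m ∈ Finset.range (n+1), (t ^ γ) ^ (-(n:ℝ) : ℝ) * (t ^ m * w m)
        = (t ^ γ) ^ (-(n:ℝ) : ℝ) * (q * t + p) ^ n := by
      rw [← Finset.mul_sum]
      congr 1
      have := add_pow (q * t) p n
      rw [this]
      apply Finset.sum_congr rfl
      intro m _
      rw [hw, mul_pow]
      ring
    have step4 : (t ^ γ) ^ (-(n:ℝ) : ℝ) * (q * t + p) ^ n = f ^ n := by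
      rw [Real.rpow_neg (le_of_lt (Real.rpow_pos_of_pos ht0 γ)),
        Real.rpow_natCast, hf, div_pow]
      rw [show q * t + p = p + q * t by ring]
      field_simp
    have step5 : f ^ n = Real.exp (-c₁ * n) := by
      rw [hc₁]
      rw [show -(-Real.log f) * (n:ℝ) = (n:ℝ) * Real.log f by ring]
      rw [Real.exp_nat_mul, Real.exp_log hf0]
    calc ∑ m ∈ (Finset.range (n+1)).filter (fun m : ℕ => (m : ℝ) ≤ γ * n), epsDef k m * w m
        ≤ ∑ m ∈ (Finset.range (n+1)).filter (fun m : ℕ => (m : ℝ) ≤ γ * n),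
            (t ^ γ) ^ (-(n:ℝ) : ℝ) * (t ^ m * w m) := step1
      _ ≤ ∑ m ∈ Finset.range (n+1), (t ^ γ) ^ (-(n:ℝ) : ℝ) * (t ^ m * w m) := step2
      _ = (t ^ γ) ^ (-(n:ℝ) : ℝ) * (q * t + p) ^ n := step3
      _ = f ^ n := step4
      _ = Real.exp (-c₁ * n) := step5
  -- bound the high part
  have hhigh : ∑ m ∈ (Finset.range (n+1)).filter (fun m : ℕ => ¬ (m : ℝ) ≤ γ * n),
      epsDef k m * w m ≤ Real.exp (-c₂ * n) := by
    have hB : ∀ m ∈ (Finset.range (n+1)).filter (fun m : ℕ => ¬ (m : ℝ) ≤ γ * n),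
        epsDef k m * w m ≤ Real.exp (-c₂ * n) * w m := by
      intro m hm
      rw [Finset.mem_filter] at hm
      have hmγ : γ * n < (m : ℝ) := lt_of_not_ge hm.2
      have hkm : k ≤ m := by
        have : (k : ℝ) < (m : ℝ) := by
          calc (k:ℝ) ≤ R * n := hkRn
            _ < γ * n := by
                apply mul_lt_mul_of_pos_right hγR hn0
            _ < m := hmγ
        exact_mod_cast le_of_lt this
      have h1 : epsDef k m ≤ (2:ℝ) ^ ((k:ℤ) - (m:ℤ)) := epsDef_le_zpow hkm
      have h2 : (2:ℝ) ^ ((k:ℤ) - (m:ℤ)) ≤ Real.exp (-c₂ * n) := by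
        have e1 : (2:ℝ) ^ ((k:ℤ) - (m:ℤ)) = (2:ℝ) ^ (((k:ℝ) - (m:ℝ)) : ℝ) := by
          rw [← Real.rpow_intCast 2 ((k:ℤ) - (m:ℤ))]
          push_cast
          ring_nf
        rw [e1]
        have e2 : (k:ℝ) - (m:ℝ) ≤ (R - γ) * n := by nlinarith
        calc (2:ℝ) ^ (((k:ℝ) - (m:ℝ)) : ℝ) ≤ (2:ℝ) ^ (((R - γ) * n) : ℝ) :=
              Real.rpow_le_rpow_of_exponent_le (by norm_num) e2
          _ = Real.exp (-c₂ * n) := by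
              rw [Real.rpow_def_of_pos (by norm_num : (0:ℝ) < 2), hc₂]
              congr 1
              ring
      calc epsDef k m * w m ≤ (2:ℝ) ^ ((k:ℤ) - (m:ℤ)) * w m :=
            mul_le_mul_of_nonneg_right h1 (hw0 m)
        _ ≤ Real.exp (-c₂ * n) * w m := mul_le_mul_of_nonneg_right h2 (hw0 m)
    calc ∑ m ∈ (Finset.range (n+1)).filter (fun m : ℕ => ¬ (m : ℝ) ≤ γ * n), epsDef k m * w m
        ≤ ∑ m ∈ (Finset.range (n+1)).filter (fun m : ℕ => ¬ (m : ℝ) ≤ γ * n),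
            Real.exp (-c₂ * n) * w m := Finset.sum_le_sum hB
      _ ≤ ∑ m ∈ Finset.range (n+1), Real.exp (-c₂ * n) * w m := by
          apply Finset.sum_le_sum_of_subset_of_nonneg (Finset.filter_subset _ _)
          intro m _ _
          exact mul_nonneg (le_of_lt (Real.exp_pos _)) (hw0 m)
      _ = Real.exp (-c₂ * n) * ∑ m ∈ Finset.range (n+1), w m := by rw [Finset.mul_sum]
      _ = Real.exp (-c₂ * n) := by rw [hwsum, mul_one]
  -- combine
  have hmin1 : Real.exp (-c₁ * n) ≤ Real.exp (-(min c₁ c₂) * n) :=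
    Real.exp_le_exp.2 (mul_le_mul_of_nonneg_right (neg_le_neg (min_le_left _ _)) (le_of_lt hn0))
  have hmin2 : Real.exp (-c₂ * n) ≤ Real.exp (-(min c₁ c₂) * n) :=
    Real.exp_le_exp.2 (mul_le_mul_of_nonneg_right (neg_le_neg (min_le_right _ _)) (le_of_lt hn0))
  calc _ ≤ Real.exp (-c₁ * n) + Real.exp (-c₂ * n) := add_le_add hlow hhigh
    _ ≤ Real.exp (-(min c₁ c₂) * n) + Real.exp (-(min c₁ c₂) * n) := add_le_add hmin1 hmin2
    _ = 2 * Real.exp (-(min c₁ c₂) * n) := by ring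
end

section
/- Let p ∈ (0, 1) and R ∈ (1 − p, 1) be real numbers, and for each n set k_n := ⌈R n⌉. Then lim_{n→∞} Σ_{ñ=0}^{n} ε_d(k_n, ñ) · C(n, ñ) · (1 − p)^ñ p^{n−ñ} = 1. In other words, above the erasure-channel capacity 1 − p, the average rank-deficiency probability ⟨ε_d⟩ of a random code of rate R tends to 1. -/
open Finset Filter Polynomial Topology

lemma epsDef_eq_one_of_lt {k ν : ℕ} (h : ν < k) : epsDef k ν = 1 := by
  rw [epsDef, prod_eq_zero (mem_range.2 h) (by simp), sub_zero]

lemma epsDef_mem_Icc (k ν : ℕ) : epsDef k ν ∈ Set.Icc (0 : ℝ) 1 := by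
  rcases lt_or_ge ν k with h | h
  · simp [epsDef_eq_one_of_lt h]
  have hfactor : ∀ i ∈ range k,
      0 ≤ 1 - (2 : ℝ) ^ ((i : ℤ) - ν) ∧ 1 - (2 : ℝ) ^ ((i : ℤ) - ν) ≤ 1 :=
    fun i hi => by
      have hneg : (i : ℤ) - ν < 0 := by have := mem_range.1 hi; omega
      have := zpow_lt_one_of_neg₀ (one_lt_two (α := ℝ)) hneg
      have := zpow_pos (two_pos (α := ℝ)) ((i : ℤ) - ν)
      constructor <;> linarith
  exact ⟨sub_nonneg.2 (prod_le_one (fun i hi => (hfactor i hi).1) fun i hi => (hfactor i hi).2),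
    sub_le_self _ (prod_nonneg fun i hi => (hfactor i hi).1)⟩

lemma bernsteinPolynomial_eval_eq (n ν : ℕ) (x : ℝ) :
    (bernsteinPolynomial ℝ n ν).eval x = n.choose ν * x ^ ν * (1 - x) ^ (n - ν) := by
  simp [bernsteinPolynomial]

lemma sum_bernsteinPolynomial_eval (n : ℕ) (x : ℝ) :
    ∑ ν ∈ range (n + 1), (bernsteinPolynomial ℝ n ν).eval x = 1 := by
  simpa [eval_finsetSum] using congrArg (eval x) (bernsteinPolynomial.sum ℝ n)

lemma sum_sq_mul_bernsteinPolynomial_eval (n : ℕ) (x : ℝ) :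
    ∑ ν ∈ range (n + 1), (n * x - ν) ^ 2 * (bernsteinPolynomial ℝ n ν).eval x
      = n * x * (1 - x) := by
  simpa [eval_finsetSum, nsmul_eq_mul] using
    congrArg (eval x) (bernsteinPolynomial.variance ℝ n)

section Bernstein

variable {x : ℝ}

lemma bernsteinPolynomial_eval_nonneg (hx0 : 0 ≤ x) (hx1 : x ≤ 1) (n ν : ℕ) :
    0 ≤ (bernsteinPolynomial ℝ n ν).eval x := by
  rw [bernsteinPolynomial_eval_eq]
  have : 0 ≤ 1 - x := sub_nonneg.2 hx1
  positivity

lemma sum_bernsteinPolynomial_eval_tail_le (hx0 : 0 ≤ x) (hx1 : x ≤ 1) {n k : ℕ}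
    (hk : n * x < k) :
    ∑ ν ∈ range (n + 1) with k ≤ ν, (bernsteinPolynomial ℝ n ν).eval x
      ≤ n * x * (1 - x) / (k - n * x) ^ 2 := by
  have hgap : 0 < ((k : ℝ) - n * x) ^ 2 := by nlinarith
  rw [le_div_iff₀ hgap, sum_mul, ← sum_sq_mul_bernsteinPolynomial_eval]
  calc ∑ ν ∈ range (n + 1) with k ≤ ν, (bernsteinPolynomial ℝ n ν).eval x * (k - n * x) ^ 2
      ≤ ∑ ν ∈ range (n + 1) with k ≤ ν,
          (n * x - ν) ^ 2 * (bernsteinPolynomial ℝ n ν).eval x := by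
        refine sum_le_sum fun ν hν => ?_
        have hkν : (k : ℝ) ≤ ν := by exact_mod_cast (mem_filter.1 hν).2
        have hsq : ((k : ℝ) - n * x) ^ 2 ≤ (n * x - ν) ^ 2 := by nlinarith
        rw [mul_comm]
        exact mul_le_mul_of_nonneg_right hsq (bernsteinPolynomial_eval_nonneg hx0 hx1 n ν)
    _ ≤ _ := sum_le_sum_of_subset_of_nonneg (filter_subset _ _) fun ν _ _ =>
        mul_nonneg (sq_nonneg _) (bernsteinPolynomial_eval_nonneg hx0 hx1 n ν)

lemma tendsto_sum_bernsteinPolynomial_eval_tail (hx0 : 0 ≤ x) (hx1 : x ≤ 1) {R : ℝ}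
    (hxR : x < R) :
    Tendsto (fun n : ℕ => ∑ ν ∈ range (n + 1) with ⌈R * n⌉₊ ≤ ν,
      (bernsteinPolynomial ℝ n ν).eval x) atTop (𝓝 0) := by
  have hbound : ∀ᶠ n : ℕ in atTop, ∑ ν ∈ range (n + 1) with ⌈R * n⌉₊ ≤ ν,
      (bernsteinPolynomial ℝ n ν).eval x ≤ x * (1 - x) / (R - x) ^ 2 * (1 / n) := by
    filter_upwards [eventually_ge_atTop 1] with n hn
    have hn0 : (0 : ℝ) < n := by exact_mod_cast hn
    have hgap : (R - x) * n ≤ ⌈R * n⌉₊ - n * x := by nlinarith [Nat.le_ceil (R * n)]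
    have hgap0 : 0 < (R - x) * n := mul_pos (sub_pos.2 hxR) hn0
    calc _ ≤ n * x * (1 - x) / (⌈R * n⌉₊ - n * x) ^ 2 :=
          sum_bernsteinPolynomial_eval_tail_le hx0 hx1 (by linarith)
      _ ≤ n * x * (1 - x) / ((R - x) * n) ^ 2 := by
          have : 0 ≤ 1 - x := sub_nonneg.2 hx1
          gcongr
      _ = x * (1 - x) / (R - x) ^ 2 * (1 / n) := by field_simp
  have hlim := (tendsto_one_div_atTop_nhds_zero_nat (𝕜 := ℝ)).const_mul
    (x * (1 - x) / (R - x) ^ 2)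
  rw [mul_zero] at hlim
  exact tendsto_of_tendsto_of_tendsto_of_le_of_le' tendsto_const_nhds hlim
    (Eventually.of_forall fun n =>
      sum_nonneg fun ν _ => bernsteinPolynomial_eval_nonneg hx0 hx1 n ν)
    hbound

lemma sum_epsDef_mul_bernsteinPolynomial_eval_le_one (hx0 : 0 ≤ x) (hx1 : x ≤ 1) (k n : ℕ) :
    ∑ ν ∈ range (n + 1), epsDef k ν * (bernsteinPolynomial ℝ n ν).eval x ≤ 1 := by
  rw [← sum_bernsteinPolynomial_eval n x]
  exact sum_le_sum fun ν _ =>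
    mul_le_of_le_one_left (bernsteinPolynomial_eval_nonneg hx0 hx1 n ν) (epsDef_mem_Icc k ν).2

lemma one_sub_tail_le_sum_epsDef_mul_bernsteinPolynomial_eval (hx0 : 0 ≤ x) (hx1 : x ≤ 1)
    (k n : ℕ) :
    1 - ∑ ν ∈ range (n + 1) with k ≤ ν, (bernsteinPolynomial ℝ n ν).eval x
      ≤ ∑ ν ∈ range (n + 1), epsDef k ν * (bernsteinPolynomial ℝ n ν).eval x := by
  rw [← sum_bernsteinPolynomial_eval n x, ← sum_filter_add_sum_filter_not _ (k ≤ ·),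
    add_sub_cancel_left]
  calc ∑ ν ∈ range (n + 1) with ¬k ≤ ν, (bernsteinPolynomial ℝ n ν).eval x
      = ∑ ν ∈ range (n + 1) with ¬k ≤ ν,
          epsDef k ν * (bernsteinPolynomial ℝ n ν).eval x :=
        sum_congr rfl fun ν hν => by
          rw [epsDef_eq_one_of_lt (not_le.1 (mem_filter.1 hν).2), one_mul]
    _ ≤ _ := sum_le_sum_of_subset_of_nonneg (filter_subset _ _) fun ν _ _ =>
        mul_nonneg (epsDef_mem_Icc k ν).1 (bernsteinPolynomial_eval_nonneg hx0 hx1 n ν)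

end Bernstein

theorem average_rank_deficiency_above_capacity_general
    (p R : ℝ) (hp0 : 0 < p) (hp1 : p < 1) (hRcap : 1 - p < R) :
    Filter.Tendsto
      (fun n : ℕ =>
        ∑ ntilde ∈ Finset.range (n + 1),
          epsDef ⌈R * (n : ℝ)⌉₊ ntilde * (n.choose ntilde : ℝ) *
            (1 - p) ^ ntilde * p ^ (n - ntilde))
      Filter.atTop (nhds 1) := by
  have hx0 : 0 ≤ 1 - p := by linarith
  have hx1 : 1 - p ≤ 1 := by linarith
  have hsummand : ∀ k n ν : ℕ, epsDef k ν * (n.choose ν : ℝ) * (1 - p) ^ ν * p ^ (n - ν)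
      = epsDef k ν * (bernsteinPolynomial ℝ n ν).eval (1 - p) := fun k n ν => by
    rw [bernsteinPolynomial_eval_eq, sub_sub_cancel]; ring
  simp only [hsummand]
  have hlower := (tendsto_sum_bernsteinPolynomial_eval_tail hx0 hx1 hRcap).const_sub 1
  rw [sub_zero] at hlower
  exact tendsto_of_tendsto_of_tendsto_of_le_of_le hlower tendsto_const_nhds
    (fun n => one_sub_tail_le_sum_epsDef_mul_bernsteinPolynomial_eval hx0 hx1 _ n)
    (fun n => sum_epsDef_mul_bernsteinPolynomial_eval_le_one hx0 hx1 _ n)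

/-- Above the erasure-channel capacity `1 - p`, the average rank-deficiency probability
`⟨ε_d⟩ = Σ_{ñ=0}^{n} ε_d(⌈Rn⌉, ñ) C(n, ñ) (1-p)^ñ p^{n-ñ}` of a random code of rate `R`
tends to `1` as `n → ∞`. -/
theorem average_rank_deficiency_above_capacity
    (p R : ℝ) (hp0 : 0 < p) (hp1 : p < 1) (hRcap : 1 - p < R) (hR1 : R < 1) :
    Filter.Tendsto
      (fun n : ℕ =>
        ∑ ntilde ∈ Finset.range (n + 1),
          epsDef ⌈R * (n : ℝ)⌉₊ ntilde * (n.choose ntilde : ℝ) *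
            (1 - p) ^ ntilde * p ^ (n - ntilde))
      Filter.atTop (nhds 1) :=
  average_rank_deficiency_above_capacity_general p R hp0 hp1 hRcap
end
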